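/- Let C be a category with zero morphisms, a zero object, and phased biproducts of every pair of objects. Then every phased coproduct (P, κ_A, κ_B) of objects A, B in C admits a unique pair of morphisms π_A : P → A, π_B : P → B making (P, κ_A, κ_B, π_A, π_B) a phased biproduct; in particular π_A is the unique morphism with π_A ∘ κ_A = id_A and π_A ∘ κ_B = 0, and similarly for π_B. -/

import Mathlib

open CategoryTheory CategoryTheory.Limits

universe v u

variable {C : Type u} [Category.{v} C]

/-- Phased coproduct of a family of objects. -/
structure IsPhasedCoproduct {ι : Type*} (A : ι → C) (P : C) (κ : ∀ i, A i ⟶ P) : Prop where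
  lift : ∀ {D : C} (f : ∀ i, A i ⟶ D), ∃ h : P ⟶ D, ∀ i, κ i ≫ h = f i
  phase : ∀ {D : C} (h h' : P ⟶ D), (∀ i, κ i ≫ h = κ i ≫ h') →
    ∃ U : P ⟶ P, (∀ i, κ i ≫ U = κ i) ∧ h' = U ≫ h

/-- Binary phased coproduct. -/
structure IsPhasedCoproduct₂ (A B P : C) (κA : A ⟶ P) (κB : B ⟶ P) : Prop where
  lift : ∀ {D : C} (f : A ⟶ D) (g : B ⟶ D), ∃ h : P ⟶ D, κA ≫ h = f ∧ κB ≫ h = g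
  phase : ∀ {D : C} (h h' : P ⟶ D), κA ≫ h = κA ≫ h' → κB ≫ h = κB ≫ h' →
    ∃ U : P ⟶ P, (κA ≫ U = κA ∧ κB ≫ U = κB) ∧ h' = U ≫ h

/-- Binary (actual) coproduct, phrased elementarily. -/
def IsCoproduct₂ (A B P : C) (κA : A ⟶ P) (κB : B ⟶ P) : Prop :=
  ∀ {D : C} (f : A ⟶ D) (g : B ⟶ D), ∃! h : P ⟶ D, κA ≫ h = f ∧ κB ≫ h = g

/-- Phased initial object. -/
structure IsPhasedInitial (Z : C) : Prop where
  exists_hom : ∀ A : C, Nonempty (Z ⟶ A)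
  phase : ∀ {A : C} (a b : Z ⟶ A), ∃ U : Z ⟶ Z, b = U ≫ a

/-- The category has phased coproducts of all pairs of objects. -/
def HasPhasedCoproducts₂ (C : Type u) [Category.{v} C] : Prop :=
  ∀ A B : C, ∃ (P : C) (κA : A ⟶ P) (κB : B ⟶ P), IsPhasedCoproduct₂ A B P κA κB

/-- All coprojections of binary phased coproducts are monic. -/
def MonicPhasedCoproducts (C : Type u) [Category.{v} C] : Prop :=
  ∀ {A B P : C} {κA : A ⟶ P} {κB : B ⟶ P},
    IsPhasedCoproduct₂ A B P κA κB → Mono κA ∧ Mono κB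

/-- Transitive phases: every diagonal morphism intertwines phases with phases. -/
def PhasesTransitive (C : Type u) [Category.{v} C] : Prop :=
  ∀ {A B P : C} {κA : A ⟶ P} {κB : B ⟶ P} {A' B' P' : C} {κA' : A' ⟶ P'} {κB' : B' ⟶ P'},
    IsPhasedCoproduct₂ A B P κA κB → IsPhasedCoproduct₂ A' B' P' κA' κB' →
    ∀ f : P ⟶ P', (∃ g, κA ≫ f = g ≫ κA') → (∃ h, κB ≫ f = h ≫ κB') →
    ∀ U : P ⟶ P, κA ≫ U = κA → κB ≫ U = κB →
    ∃ V : P' ⟶ P', (κA' ≫ V = κA' ∧ κB' ≫ V = κB') ∧ U ≫ f = f ≫ V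

/-- Phase generator. -/
structure IsPhaseGenerator (Gen : C) : Prop where
  phaseMonic : ∀ {P : C} {κ₁ κ₂ : Gen ⟶ P}, IsPhasedCoproduct₂ Gen Gen P κ₁ κ₂ →
    ∀ d : P ⟶ Gen, κ₁ ≫ d = 𝟙 Gen → κ₂ ≫ d = 𝟙 Gen →
    ∀ U V : P ⟶ P, (κ₁ ≫ U = κ₁ ∧ κ₂ ≫ U = κ₂) → (κ₁ ≫ V = κ₁ ∧ κ₂ ≫ V = κ₂) →
      U ≫ d = V ≫ d → U = V
  phaseEpic : ∀ {P : C} {κ₁ κ₂ : Gen ⟶ P}, IsPhasedCoproduct₂ Gen Gen P κ₁ κ₂ →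
    ∀ {A B Q : C} {κA : A ⟶ Q} {κB : B ⟶ Q}, IsPhasedCoproduct₂ A B Q κA κB →
    ∀ m : P ⟶ Q, Mono m → (∃ g, κ₁ ≫ m = g ≫ κA) → (∃ h, κ₂ ≫ m = h ≫ κB) →
    ∀ U V : Q ⟶ Q, (κA ≫ U = κA ∧ κB ≫ U = κB) → (κA ≫ V = κA ∧ κB ≫ V = κB) →
      m ≫ U = m ≫ V → U = V

/-- Binary phased product (dual to a binary phased coproduct). -/
structure IsPhasedProduct₂ (A B Q : C) (πA : Q ⟶ A) (πB : Q ⟶ B) : Prop where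
  lift : ∀ {D : C} (f : D ⟶ A) (g : D ⟶ B), ∃ h : D ⟶ Q, h ≫ πA = f ∧ h ≫ πB = g
  phase : ∀ {D : C} (h h' : D ⟶ Q), h ≫ πA = h' ≫ πA → h ≫ πB = h' ≫ πB →
    ∃ U : Q ⟶ Q, (U ≫ πA = πA ∧ U ≫ πB = πB) ∧ h' = h ≫ U

/-- Phased product of a family of objects. -/
structure IsPhasedProduct {ι : Type*} (A : ι → C) (Q : C) (π : ∀ i, Q ⟶ A i) : Prop where
  lift : ∀ {D : C} (f : ∀ i, D ⟶ A i), ∃ h : D ⟶ Q, ∀ i, h ≫ π i = f i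
  phase : ∀ {D : C} (h h' : D ⟶ Q), (∀ i, h ≫ π i = h' ≫ π i) →
    ∃ U : Q ⟶ Q, (∀ i, U ≫ π i = π i) ∧ h' = h ≫ U

section ZeroMorphisms

variable [HasZeroMorphisms C]

/-- Binary phased biproduct: a simultaneous phased coproduct and phased product with
the usual biproduct equations, such that the coproduct and the product have the same
phases. -/
structure IsPhasedBiproduct₂ (A B P : C) (κA : A ⟶ P) (κB : B ⟶ P)
    (πA : P ⟶ A) (πB : P ⟶ B) : Prop where
  κAπA : κA ≫ πA = 𝟙 A
  κBπB : κB ≫ πB = 𝟙 B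
  κAπB : κA ≫ πB = 0
  κBπA : κB ≫ πA = 0
  coprod : IsPhasedCoproduct₂ A B P κA κB
  prod : IsPhasedProduct₂ A B P πA πB
  phases_eq : ∀ U : P ⟶ P,
    (κA ≫ U = κA ∧ κB ≫ U = κB) ↔ (U ≫ πA = πA ∧ U ≫ πB = πB)

/-- Phased biproduct of a family of objects. -/
structure IsPhasedBiproduct {ι : Type*} (A : ι → C) (P : C)
    (κ : ∀ i, A i ⟶ P) (π : ∀ i, P ⟶ A i) : Prop where
  diag : ∀ i, κ i ≫ π i = 𝟙 (A i)
  offdiag : ∀ i j, i ≠ j → κ i ≫ π j = 0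
  coprod : IsPhasedCoproduct A P κ
  prod : IsPhasedProduct A P π
  phases_eq : ∀ U : P ⟶ P, (∀ i, κ i ≫ U = κ i) ↔ (∀ i, U ≫ π i = π i)

end ZeroMorphisms

/-!
Every phase of a phased coproduct is invertible, so the comparison morphism from a phased
coproduct `P` to the phased biproduct of `A` and `B` (which exists by assumption) is an
isomorphism; composing with it carries the projections over to `P`. In a phased biproduct the
projection `π_A` is forced by `κ_A ≫ π_A = 𝟙` and `κ_B ≫ π_A = 0`: any other such `p` equals
`U ≫ π_A` for a coproduct phase `U`, which is a product phase because the phases agree, so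
`U ≫ π_A = π_A`.
-/

namespace IsPhasedCoproduct₂

variable {A B P : C} {κA : A ⟶ P} {κB : B ⟶ P}

theorem exists_phase_comp_eq_id (hc : IsPhasedCoproduct₂ A B P κA κB) {U : P ⟶ P}
    (hUA : κA ≫ U = κA) (hUB : κB ≫ U = κB) :
    ∃ V : P ⟶ P, (κA ≫ V = κA ∧ κB ≫ V = κB) ∧ V ≫ U = 𝟙 P := by
  obtain ⟨V, hV, hVU⟩ := hc.phase U (𝟙 P) (by rw [hUA, Category.comp_id])
    (by rw [hUB, Category.comp_id])
  exact ⟨V, hV, hVU.symm⟩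

theorem isIso_of_phase (hc : IsPhasedCoproduct₂ A B P κA κB) {U : P ⟶ P}
    (hUA : κA ≫ U = κA) (hUB : κB ≫ U = κB) : IsIso U := by
  obtain ⟨V, ⟨hVA, hVB⟩, hVU⟩ := hc.exists_phase_comp_eq_id hUA hUB
  obtain ⟨W, -, hWV⟩ := hc.exists_phase_comp_eq_id hVA hVB
  have hWU : W = U := by
    calc W = W ≫ V ≫ U := by rw [hVU, Category.comp_id]
      _ = U := by rw [← Category.assoc, hWV, Category.id_comp]
  exact ⟨V, by rw [← hWU, hWV], hVU⟩

theorem isIso_of_coprojections_comp {P' : C} {κA' : A ⟶ P'} {κB' : B ⟶ P'}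
    (hc : IsPhasedCoproduct₂ A B P κA κB) (hc' : IsPhasedCoproduct₂ A B P' κA' κB')
    {f : P ⟶ P'} (hfA : κA ≫ f = κA') (hfB : κB ≫ f = κB') : IsIso f := by
  obtain ⟨s, hsA, hsB⟩ := hc'.lift κA κB
  have : IsIso (f ≫ s) := hc.isIso_of_phase (by rw [← Category.assoc, hfA, hsA])
    (by rw [← Category.assoc, hfB, hsB])
  have : IsIso (s ≫ f) := hc'.isIso_of_phase (by rw [← Category.assoc, hsA, hfA])
    (by rw [← Category.assoc, hsB, hfB])
  have : Mono f := mono_of_mono f s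
  have : IsSplitEpi f := IsSplitEpi.mk' ⟨inv (s ≫ f) ≫ s, by simp⟩
  exact isIso_of_mono_of_isSplitEpi f

end IsPhasedCoproduct₂

theorem IsPhasedProduct₂.of_isIso {A B Q Q' : C} {πA : Q ⟶ A} {πB : Q ⟶ B}
    (hp : IsPhasedProduct₂ A B Q πA πB) (e : Q' ⟶ Q) [IsIso e] :
    IsPhasedProduct₂ A B Q' (e ≫ πA) (e ≫ πB) where
  lift f g := by
    obtain ⟨k, hkA, hkB⟩ := hp.lift f g
    exact ⟨k ≫ inv e, by simp [hkA], by simp [hkB]⟩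
  phase h h' hA hB := by
    obtain ⟨U, ⟨hUA, hUB⟩, hU⟩ := hp.phase (h ≫ e) (h' ≫ e) (by simpa using hA)
      (by simpa using hB)
    refine ⟨e ≫ U ≫ inv e, ⟨by simp [hUA], by simp [hUB]⟩, ?_⟩
    simpa using congrArg (· ≫ inv e) hU

namespace IsPhasedBiproduct₂

variable [HasZeroMorphisms C] {A B P : C} {κA : A ⟶ P} {κB : B ⟶ P} {πA : P ⟶ A}
  {πB : P ⟶ B}

theorem eq_fst (hb : IsPhasedBiproduct₂ A B P κA κB πA πB) {p : P ⟶ A}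
    (hpA : κA ≫ p = 𝟙 A) (hpB : κB ≫ p = 0) : p = πA := by
  obtain ⟨U, hU, rfl⟩ := hb.coprod.phase πA p (by rw [hb.κAπA, hpA])
    (by rw [hb.κBπA, hpB])
  exact ((hb.phases_eq U).mp hU).1

theorem eq_snd (hb : IsPhasedBiproduct₂ A B P κA κB πA πB) {p : P ⟶ B}
    (hpA : κA ≫ p = 0) (hpB : κB ≫ p = 𝟙 B) : p = πB := by
  obtain ⟨U, hU, rfl⟩ := hb.coprod.phase πB p (by rw [hb.κAπB, hpA])
    (by rw [hb.κBπB, hpB])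
  exact ((hb.phases_eq U).mp hU).2

theorem of_isIso {P' : C} {κA' : A ⟶ P'} {κB' : B ⟶ P'}
    (hb : IsPhasedBiproduct₂ A B P κA κB πA πB) (hc : IsPhasedCoproduct₂ A B P' κA' κB')
    (e : P' ⟶ P) [IsIso e] (heA : κA' ≫ e = κA) (heB : κB' ≫ e = κB) :
    IsPhasedBiproduct₂ A B P' κA' κB' (e ≫ πA) (e ≫ πB) where
  κAπA := by rw [← Category.assoc, heA, hb.κAπA]
  κBπB := by rw [← Category.assoc, heB, hb.κBπB]
  κAπB := by rw [← Category.assoc, heA, hb.κAπB]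
  κBπA := by rw [← Category.assoc, heB, hb.κBπA]
  coprod := hc
  prod := hb.prod.of_isIso e
  phases_eq U := by
    -- `U` is a phase of `P'` exactly when its conjugate `inv e ≫ U ≫ e` is a phase of `P`.
    have hκA : κA' ≫ U = κA' ↔ κA ≫ inv e ≫ U ≫ e = κA := by
      rw [← heA, Category.assoc, IsIso.hom_inv_id_assoc, ← Category.assoc, cancel_mono]
    have hκB : κB' ≫ U = κB' ↔ κB ≫ inv e ≫ U ≫ e = κB := by
      rw [← heB, Category.assoc, IsIso.hom_inv_id_assoc, ← Category.assoc, cancel_mono]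
    have hπA : U ≫ e ≫ πA = e ≫ πA ↔ (inv e ≫ U ≫ e) ≫ πA = πA := by
      simp only [Category.assoc, ← cancel_epi (inv e), IsIso.inv_hom_id_assoc]
    have hπB : U ≫ e ≫ πB = e ≫ πB ↔ (inv e ≫ U ≫ e) ≫ πB = πB := by
      simp only [Category.assoc, ← cancel_epi (inv e), IsIso.inv_hom_id_assoc]
    rw [hκA, hκB, hπA, hπB]
    exact hb.phases_eq _

end IsPhasedBiproduct₂

theorem stmt_16_general [HasZeroMorphisms C]
    (hbip : ∀ A B : C, ∃ (P : C) (κA : A ⟶ P) (κB : B ⟶ P) (πA : P ⟶ A) (πB : P ⟶ B),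
      IsPhasedBiproduct₂ A B P κA κB πA πB)
    {A B P : C} {κA : A ⟶ P} {κB : B ⟶ P} (h : IsPhasedCoproduct₂ A B P κA κB) :
    (∃! p : (P ⟶ A) × (P ⟶ B), IsPhasedBiproduct₂ A B P κA κB p.1 p.2) ∧
    (∃! pA : P ⟶ A, κA ≫ pA = 𝟙 A ∧ κB ≫ pA = 0) ∧
    (∃! pB : P ⟶ B, κA ≫ pB = 0 ∧ κB ≫ pB = 𝟙 B) := by
  obtain ⟨P', κA', κB', πA', πB', hb'⟩ := hbip A B
  obtain ⟨f, hfA, hfB⟩ := h.lift κA' κB'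
  have : IsIso f := h.isIso_of_coprojections_comp hb'.coprod hfA hfB
  have hb := hb'.of_isIso h f hfA hfB
  refine ⟨⟨(f ≫ πA', f ≫ πB'), hb, ?_⟩, ⟨f ≫ πA', ⟨hb.κAπA, hb.κBπA⟩, ?_⟩,
    ⟨f ≫ πB', ⟨hb.κAπB, hb.κBπB⟩, ?_⟩⟩
  · exact fun p hp => Prod.ext (hb.eq_fst hp.κAπA hp.κBπA) (hb.eq_snd hp.κAπB hp.κBπB)
  · exact fun p hp => hb.eq_fst hp.1 hp.2
  · exact fun p hp => hb.eq_snd hp.1 hp.2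

/-- in a category with zero morphisms, a zero object and binary phased
biproducts, every phased coproduct carries a unique phased biproduct structure; the
projection `π_A` is the unique morphism with `π_A ∘ κ_A = id` and `π_A ∘ κ_B = 0`,
and similarly for `π_B`. -/
theorem stmt_16 [HasZeroMorphisms C] [HasZeroObject C]
    (hbip : ∀ A B : C, ∃ (P : C) (κA : A ⟶ P) (κB : B ⟶ P) (πA : P ⟶ A) (πB : P ⟶ B),
      IsPhasedBiproduct₂ A B P κA κB πA πB)
    {A B P : C} {κA : A ⟶ P} {κB : B ⟶ P} (h : IsPhasedCoproduct₂ A B P κA κB) :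
    (∃! p : (P ⟶ A) × (P ⟶ B), IsPhasedBiproduct₂ A B P κA κB p.1 p.2) ∧
    (∃! pA : P ⟶ A, κA ≫ pA = 𝟙 A ∧ κB ≫ pA = 0) ∧
    (∃! pB : P ⟶ B, κA ≫ pB = 0 ∧ κB ≫ pB = 𝟙 B) :=
  stmt_16_general hbip h
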